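/- (Load bound for nested sets of tight jobs; core of the exponential-increase lemma.) Let α ∈ (0,1) and let J be a finite set of jobs feasible on m machines. Let S_0, S_1, …, S_k ⊆ J be pairwise disjoint sets, each consisting of α-tight jobs, such that I(S_i) ⊆ I(S_k) for every 0 ≤ i < k. Then α·Σ_{i=0}^{k−1} |I(S_i)| ≤ m·|I(S_k)|. In particular, if additionally |I(S_i)| ≥ |I(S_0)| for all i and α·k ≥ 2m, then |I(S_k)| ≥ 2·|I(S_0)|. -/

import Mathlib

/-- A job given by integer release date `r`, deadline `d`, and processing time `p`. -/
structure Job where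
  r : ℤ
  d : ℤ
  p : ℤ
deriving DecidableEq

/-- A job is valid if `1 ≤ p` and `r + p ≤ d`. -/
def Job.valid (j : Job) : Prop := 1 ≤ j.p ∧ j.r + j.p ≤ j.d

/-- The interval `I(j) = {t ∈ ℤ : r ≤ t < d}` of a job. -/
noncomputable def Job.interval (j : Job) : Finset ℤ := Finset.Ico j.r j.d

/-- The laxity `ℓ_j = d - r - p` of a job. -/
def Job.lax (j : Job) : ℤ := j.d - j.r - j.p

/-- The contribution `C(j, I) = max {0, |I ∩ I(j)| - ℓ_j}` of a job to a finite set `I ⊆ ℤ`. -/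
noncomputable def contribution (j : Job) (I : Finset ℤ) : ℤ :=
  max 0 (((I ∩ j.interval).card : ℤ) - j.lax)

/-- A finite set of jobs `J` is feasible on `m` machines. -/
def Feasible (J : Finset Job) (m : ℕ) : Prop :=
  ∃ σ : ℤ → Finset Job,
    (∀ t, σ t ⊆ J) ∧
    (∀ t, (σ t).card ≤ m) ∧
    (∀ t, ∀ j ∈ σ t, j.r ≤ t ∧ t < j.d) ∧
    (∀ j ∈ J, ((Finset.Ico j.r j.d).filter (fun t => j ∈ σ t)).card = j.p.toNat)

/-- A job is `α`-tight if `p_j > α (d_j - r_j)`. -/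
def AlphaTight (α : ℝ) (j : Job) : Prop := α * ((j.d : ℝ) - (j.r : ℝ)) < (j.p : ℝ)

/-- The `β`-interval `I_β(j) = [r_j + βℓ_j, d_j - βℓ_j)` of a job (a real interval). -/
def betaInterval (β : ℝ) (j : Job) : Set ℝ :=
  Set.Ico ((j.r : ℝ) + β * (j.lax : ℝ)) ((j.d : ℝ) - β * (j.lax : ℝ))

/-- Two jobs are agreeable if `(r_j - r_{j'})·(d_j - d_{j'}) ≥ 0`. -/
def Agreeable (j j' : Job) : Prop :=
  0 ≤ ((j.r : ℝ) - (j'.r : ℝ)) * ((j.d : ℝ) - (j'.d : ℝ))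

/-- Two jobs are `β`-agreeable if they are agreeable and their `β`-intervals intersect. -/
def BetaAgreeable (β : ℝ) (j j' : Job) : Prop :=
  Agreeable j j' ∧ (betaInterval β j ∩ betaInterval β j').Nonempty

/-- `I(S) = ⋃_{j ∈ S} I(j)` for a finite set of jobs. -/
noncomputable def intervalSet (S : Finset Job) : Finset ℤ := S.biUnion (fun j => Finset.Ico j.r j.d)

/-!
Tightness gives `α·|I(j)| ≤ p_j`, so `α·Σ_{i<k} |I(S_i)|` is at most the total processing time
of the jobs in `S_0 ∪ … ∪ S_{k-1}`. All of this work is scheduled inside `I(S_k)`, where at most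
`m` jobs run at a time, so it is at most `m·|I(S_k)|`. The second part follows by bounding each
`|I(S_i)|` below by `|I(S_0)|`.
-/

open Finset

lemma AlphaTight.mul_card_Ico_le {α : ℝ} {j : Job} (hj : AlphaTight α j) :
    α * (Ico j.r j.d).card ≤ j.p.toNat := by
  rw [Int.card_Ico]
  rcases le_total j.r j.d with hrd | hdr
  · have hlen : (((j.d - j.r).toNat : ℕ) : ℝ) = (j.d : ℝ) - j.r := by
      rw [← Int.cast_natCast, Int.toNat_of_nonneg (by omega)]; push_cast; ring
    have hp : (j.p : ℝ) ≤ (j.p.toNat : ℕ) := by exact_mod_cast Int.self_le_toNat j.p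
    rw [hlen]
    exact hj.le.trans hp
  · rw [Int.toNat_of_nonpos (by omega)]
    simp

lemma mul_card_intervalSet_le_sum_toNat {α : ℝ} (hα : 0 ≤ α) {S : Finset Job}
    (hS : ∀ j ∈ S, AlphaTight α j) :
    α * (intervalSet S).card ≤ ∑ j ∈ S, (j.p.toNat : ℝ) := by
  have hcard : ((intervalSet S).card : ℝ) ≤ ∑ j ∈ S, ((Ico j.r j.d).card : ℝ) := by
    exact_mod_cast card_biUnion_le
  calc α * (intervalSet S).card
      ≤ α * ∑ j ∈ S, ((Ico j.r j.d).card : ℝ) := mul_le_mul_of_nonneg_left hcard hα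
    _ = ∑ j ∈ S, α * (Ico j.r j.d).card := mul_sum _ _ _
    _ ≤ ∑ j ∈ S, (j.p.toNat : ℝ) := sum_le_sum fun j hj => (hS j hj).mul_card_Ico_le

/-- Double counting the pairs `(j, t)` with `j` scheduled at time `t`. -/
lemma Feasible.sum_toNat_le {J : Finset Job} {m : ℕ} (hfeas : Feasible J m) {T : Finset Job}
    (hT : T ⊆ J) {A : Finset ℤ} (hA : intervalSet T ⊆ A) :
    ∑ j ∈ T, j.p.toNat ≤ m * A.card := by
  obtain ⟨σ, -, hσm, -, hσp⟩ := hfeas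
  calc ∑ j ∈ T, j.p.toNat
      = ∑ j ∈ T, #{t ∈ Ico j.r j.d | j ∈ σ t} := sum_congr rfl fun j hj => (hσp j (hT hj)).symm
    _ ≤ ∑ j ∈ T, #{t ∈ A | j ∈ σ t} := sum_le_sum fun j hj =>
        card_le_card (filter_subset_filter _ ((subset_biUnion_of_mem _ hj).trans hA))
    _ = ∑ t ∈ A, #{j ∈ T | j ∈ σ t} := by simp only [card_filter]; exact sum_comm
    _ ≤ ∑ _t ∈ A, m := sum_le_sum fun t _ =>
        (card_le_card fun j hj => (mem_filter.1 hj).2).trans (hσm t)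
    _ = m * A.card := by rw [sum_const, smul_eq_mul, mul_comm]

lemma Feasible.mul_sum_card_intervalSet_le {J : Finset Job} {m : ℕ} (hfeas : Feasible J m)
    {α : ℝ} (hα : 0 ≤ α) {ι : Type*} {s : Finset ι} {S : ι → Finset Job} {A : Finset ℤ}
    (hsub : ∀ i ∈ s, S i ⊆ J) (hdisj : (s : Set ι).PairwiseDisjoint S)
    (htight : ∀ i ∈ s, ∀ j ∈ S i, AlphaTight α j) (hA : ∀ i ∈ s, intervalSet (S i) ⊆ A) :
    α * ∑ i ∈ s, ((intervalSet (S i)).card : ℝ) ≤ m * A.card := by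
  have hunion : intervalSet (s.biUnion S) ⊆ A := by
    rw [intervalSet, biUnion_biUnion]
    exact biUnion_subset.2 hA
  calc α * ∑ i ∈ s, ((intervalSet (S i)).card : ℝ)
      = ∑ i ∈ s, α * (intervalSet (S i)).card := mul_sum _ _ _
    _ ≤ ∑ i ∈ s, ∑ j ∈ S i, (j.p.toNat : ℝ) := sum_le_sum fun i hi =>
        mul_card_intervalSet_le_sum_toNat hα (htight i hi)
    _ = ((∑ j ∈ s.biUnion S, j.p.toNat : ℕ) : ℝ) := by rw [sum_biUnion hdisj]; push_cast; rfl
    _ ≤ m * A.card := by exact_mod_cast hfeas.sum_toNat_le (biUnion_subset.2 hsub) hunion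

theorem nested_tight_load_bound_general
    (α : ℝ) (hα : α ∈ Set.Ioo (0 : ℝ) 1)
    (J : Finset Job) (m : ℕ) (hfeas : Feasible J m)
    (k : ℕ) (S : ℕ → Finset Job)
    (hsub : ∀ i ≤ k, S i ⊆ J)
    (hdisj : ∀ i ≤ k, ∀ i' ≤ k, i ≠ i' → Disjoint (S i) (S i'))
    (htight : ∀ i ≤ k, ∀ j ∈ S i, AlphaTight α j)
    (hnest : ∀ i < k, intervalSet (S i) ⊆ intervalSet (S k)) :
    α * ∑ i ∈ Finset.range k, ((intervalSet (S i)).card : ℝ)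
        ≤ (m : ℝ) * ((intervalSet (S k)).card : ℝ) ∧
    ((∀ i ≤ k, (intervalSet (S 0)).card ≤ (intervalSet (S i)).card) →
      2 * (m : ℝ) ≤ α * (k : ℝ) →
      2 * (intervalSet (S 0)).card ≤ (intervalSet (S k)).card) := by
  have hα0 : 0 ≤ α := hα.1.le
  have hload := hfeas.mul_sum_card_intervalSet_le hα0 (s := range k) (S := S)
    (fun i hi => hsub i (mem_range.1 hi).le)
    (fun i hi i' hi' => hdisj i (mem_range.1 hi).le i' (mem_range.1 hi').le)
    (fun i hi => htight i (mem_range.1 hi).le) (fun i hi => hnest i (mem_range.1 hi))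
  refine ⟨hload, fun hge hk => ?_⟩
  rcases Nat.eq_zero_or_pos m with rfl | hm
  · -- With no machine, the load bound for `S_0` alone forces `I(S_0) = ∅`.
    have hload₀ := hfeas.mul_sum_card_intervalSet_le hα0 (s := {0}) (S := S)
      (A := intervalSet (S 0)) (by simpa using hsub 0 k.zero_le) (by simp)
      (by simpa using htight 0 k.zero_le) (by simp)
    have hS0 : α * (intervalSet (S 0)).card ≤ 0 := by simpa using hload₀
    have : (intervalSet (S 0)).card = 0 := by
      exact_mod_cast (nonpos_of_mul_nonpos_right hS0 hα.1).antisymm (Nat.cast_nonneg _)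
    simp [this]
  · have hsum : (k : ℝ) * (intervalSet (S 0)).card
        ≤ ∑ i ∈ range k, ((intervalSet (S i)).card : ℝ) := by
      simpa using card_nsmul_le_sum (range k) _ _
        fun i hi => (Nat.cast_le (α := ℝ)).2 (hge i (mem_range.1 hi).le)
    have : (m : ℝ) * (2 * (intervalSet (S 0)).card) ≤ m * (intervalSet (S k)).card :=
      calc (m : ℝ) * (2 * (intervalSet (S 0)).card)
          = 2 * m * (intervalSet (S 0)).card := by ring
        _ ≤ α * k * (intervalSet (S 0)).card := by gcongr
        _ = α * (k * (intervalSet (S 0)).card) := by ring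
        _ ≤ α * ∑ i ∈ range k, ((intervalSet (S i)).card : ℝ) := by gcongr
        _ ≤ m * (intervalSet (S k)).card := hload
    exact_mod_cast le_of_mul_le_mul_left this (Nat.cast_pos.2 hm)

/-- load bound for nested sets of tight jobs: for pairwise disjoint sets
`S_0, …, S_k ⊆ J` of α-tight jobs with `I(S_i) ⊆ I(S_k)` for `i < k`, we have
`α·Σ_{i<k} |I(S_i)| ≤ m·|I(S_k)|`; in particular, if `|I(S_i)| ≥ |I(S_0)|` for all `i`
and `α·k ≥ 2m`, then `|I(S_k)| ≥ 2·|I(S_0)|`. -/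
theorem nested_tight_load_bound
    (α : ℝ) (hα : α ∈ Set.Ioo (0 : ℝ) 1)
    (J : Finset Job) (hJ : ∀ j ∈ J, j.valid) (m : ℕ) (hfeas : Feasible J m)
    (k : ℕ) (S : ℕ → Finset Job)
    (hsub : ∀ i ≤ k, S i ⊆ J)
    (hdisj : ∀ i ≤ k, ∀ i' ≤ k, i ≠ i' → Disjoint (S i) (S i'))
    (htight : ∀ i ≤ k, ∀ j ∈ S i, AlphaTight α j)
    (hnest : ∀ i < k, intervalSet (S i) ⊆ intervalSet (S k)) :
    α * ∑ i ∈ Finset.range k, ((intervalSet (S i)).card : ℝ)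
        ≤ (m : ℝ) * ((intervalSet (S k)).card : ℝ) ∧
    ((∀ i ≤ k, (intervalSet (S 0)).card ≤ (intervalSet (S i)).card) →
      2 * (m : ℝ) ≤ α * (k : ℝ) →
      2 * (intervalSet (S 0)).card ≤ (intervalSet (S k)).card) :=
  nested_tight_load_bound_general α hα J m hfeas k S hsub hdisj htight hnest
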